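/- arXiv:2310.20428 — 2 statements merged into one kernel-verified Lean document; each statement's English description precedes it below -/
import Mathlib

section
/- Let a ∈ ℝⁿ, ‖a‖₂ = 1, b = (1, a) ∈ ℝ^{n+1}. If X is a positive semidefinite (n+1)×(n+1) matrix with X₁₁ = 1, first column equal to b, Tr(X) = 2, and X_{ii} = a_{i-1}² for all i ≥ 2, then X = b bᵀ. -/
/-!
If `X` is positive semidefinite, `X k k = 1`, and the `k`-th column `b` of `X` satisfies
`X j j = b j ^ 2`, then for `w = e_j - b j • e_k` the quadratic form `wᵀ X w` vanishes; a PSD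
matrix kills every vector on which its quadratic form vanishes, so column `j` equals
`b j` times column `k`, i.e. `X = b bᵀ`.
-/

open Matrix

namespace Matrix.PosSemidef

variable {ι : Type*} [Fintype ι] [DecidableEq ι] {X : Matrix ι ι ℝ}

theorem col_eq_smul_col (hX : X.PosSemidef) {j k : ι} {c : ℝ}
    (h : X j j - 2 * c * X k j + c ^ 2 * X k k = 0) (i : ι) : X i j = c * X i k := by
  set w : ι → ℝ := Pi.single j 1 - c • Pi.single k 1
  have hXw : X *ᵥ w = fun i => X i j - c * X i k := by
    ext i; simp [w, mulVec_sub, mulVec_smul]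
  have hjk : X j k = X k j := by simpa using hX.1.apply k j
  have hquad : star w ⬝ᵥ X *ᵥ w = 0 := by
    rw [hXw, ← h]
    simp only [w, star_trivial, sub_dotProduct, smul_dotProduct, single_dotProduct, hjk, one_mul,
      smul_eq_mul]
    ring
  have := congrFun ((hX.dotProduct_mulVec_zero_iff w).mp hquad) i
  rw [hXw] at this
  simpa [sub_eq_zero] using this

theorem eq_vecMulVec_of_diag_eq_sq (hX : X.PosSemidef) {k : ι} {b : ι → ℝ}
    (hcol : ∀ i, X i k = b i) (hk : b k = 1) (hdiag : ∀ i, X i i = b i ^ 2) :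
    X = vecMulVec b b := by
  ext i j
  have hkk : X k k = 1 := (hcol k).trans hk
  have hjk : X k j = b j := by simpa using (hX.1.apply k j).symm.trans (hcol j)
  have hcol_j : X i j = b j * X i k :=
    hX.col_eq_smul_col (by rw [hdiag j, hjk, hkk]; ring) i
  rw [vecMulVec_apply, hcol_j, hcol, mul_comm]

end Matrix.PosSemidef

theorem stmt1_general {n : ℕ} (a : Fin n → ℝ)
    (X : Matrix (Fin (n + 1)) (Fin (n + 1)) ℝ) (hX : X.PosSemidef)
    (hcol : ∀ i : Fin (n + 1), X i 0 = (Fin.cons 1 a : Fin (n + 1) → ℝ) i)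
    (hdiag : ∀ i : Fin n, X i.succ i.succ = a i ^ 2) :
    X = Matrix.vecMulVec (Fin.cons 1 a : Fin (n + 1) → ℝ)
          (Fin.cons 1 a : Fin (n + 1) → ℝ) := by
  refine hX.eq_vecMulVec_of_diag_eq_sq hcol rfl fun i => ?_
  cases i using Fin.cases with
  | zero => simpa using hcol 0
  | succ i => simpa using hdiag i

/-- A PSD matrix with `X₁₁ = 1`, first column `b = (1, a)` with `‖a‖₂ = 1`, trace 2,
and diagonal `X_{ii} = a_{i-1}²` must be the rank-one matrix `b bᵀ`. -/
theorem stmt1 {n : ℕ} (a : Fin n → ℝ) (ha : ∑ i, a i ^ 2 = 1)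
    (X : Matrix (Fin (n + 1)) (Fin (n + 1)) ℝ) (hX : X.PosSemidef)
    (hcol : ∀ i : Fin (n + 1), X i 0 = (Fin.cons 1 a : Fin (n + 1) → ℝ) i)
    (htr : X.trace = 2)
    (hdiag : ∀ i : Fin n, X i.succ i.succ = a i ^ 2) :
    X = Matrix.vecMulVec (Fin.cons 1 a : Fin (n + 1) → ℝ)
          (Fin.cons 1 a : Fin (n + 1) → ℝ) :=
  stmt1_general a X hX hcol hdiag
end

section
/- Let H be a symmetric (n+1)×(n+1) matrix with H₁₁ = 0, partitioned as H = [[0, hᵀ],[h, H̃]], and let S ⊆ {1,…,n}, with B = {(i,i) : i ∈ Sᶜ}. If the restriction of H to indices outside Ω = ({1}∪S) × ({1}∪S) decomposes as H_{Ωᶜ} = x₀ x_{Sᶜ}ᵀ + x_{Sᶜ} x₀ᵀ + P_{Ωᶜ}(H_{T⊥}) with H_{T⊥} ⪰ 0, then the off-support first-column vector satisfies ‖h_{Sᶜ}‖₂ ≤ ‖x_{Sᶜ}‖₂ + Tr(H_{T⊥}) ≤ ‖x_{Sᶜ}‖₁ + Tr(H_{T⊥}). -/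
open Matrix

/-- Control of the off-support first-column vector: if off `Ω = S × S` the matrix `H`
decomposes as `x₀ x_{Sᶜ}ᵀ + x_{Sᶜ} x₀ᵀ + K` with `K ⪰ 0`, then
`‖h_{Sᶜ}‖₂ ≤ ‖x_{Sᶜ}‖₂ + Tr K ≤ ‖x_{Sᶜ}‖₁ + Tr K`. -/
theorem stmt15 {n : ℕ} (S : Finset (Fin (n + 1))) (h0S : (0 : Fin (n + 1)) ∈ S)
    (H K : Matrix (Fin (n + 1)) (Fin (n + 1)) ℝ)
    (hHs : H.IsSymm) (hH11 : H 0 0 = 0) (hK : K.PosSemidef)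
    (x₀ xSc : Fin (n + 1) → ℝ) (hx01 : x₀ 0 = 1)
    (hx0supp : ∀ i ∉ S, x₀ i = 0) (hxScsupp : ∀ i ∈ S, xSc i = 0)
    (hdec : ∀ i j, ¬(i ∈ S ∧ j ∈ S) →
      H i j = x₀ i * xSc j + xSc i * x₀ j + K i j) :
    Real.sqrt (∑ i, if i ∈ S then 0 else H i 0 ^ 2) ≤
        Real.sqrt (∑ i, xSc i ^ 2) + K.trace ∧
      Real.sqrt (∑ i, xSc i ^ 2) + K.trace ≤ (∑ i, |xSc i|) + K.trace := by
  obtain ⟨B, hB⟩ : ∃ B : Matrix (Fin (n + 1)) (Fin (n + 1)) ℝ, K = Bᴴ * B := by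
    open scoped MatrixOrder in exact CStarAlgebra.nonneg_iff_eq_star_mul_self.mp hK.nonneg
  have hKentry : ∀ i j, K i j = ∑ k, B k i * B k j := by
    intro i j
    rw [hB]
    simp [Matrix.mul_apply, Matrix.conjTranspose_apply]
  have hdiag : ∀ i, 0 ≤ K i i := by
    intro i
    rw [hKentry]
    exact Finset.sum_nonneg fun k _ => mul_self_nonneg _
  have htr : 0 ≤ K.trace := by
    rw [Matrix.trace]
    exact Finset.sum_nonneg fun i _ => hdiag i
  have hCS : ∀ i, K i 0 ^ 2 ≤ K i i * K 0 0 := by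
    intro i
    have := Finset.sum_mul_sq_le_sq_mul_sq Finset.univ (fun k => B k i) (fun k => B k 0)
    simpa [hKentry, sq] using this
  -- value of H i 0 off S
  have hHval : ∀ i ∉ S, H i 0 = xSc i + K i 0 := by
    intro i hi
    have := hdec i 0 (fun h => hi h.1)
    rw [this, hx0supp i hi, hxScsupp 0 h0S, hx01]
    ring
  set g : Fin (n + 1) → ℝ := fun i => if i ∈ S then 0 else K i 0 with hg
  have hsum_eq : (∑ i, if i ∈ S then 0 else H i 0 ^ 2) = ∑ i, (xSc i + g i) ^ 2 := by
    refine Finset.sum_congr rfl fun i _ => ?_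
    by_cases hi : i ∈ S
    · simp [hg, hi, hxScsupp i hi]
    · simp [hg, hi, hHval i hi]
  -- triangle inequality in Euclidean space
  have htri : Real.sqrt (∑ i, (xSc i + g i) ^ 2) ≤
      Real.sqrt (∑ i, xSc i ^ 2) + Real.sqrt (∑ i, g i ^ 2) := by
    let F : EuclideanSpace ℝ (Fin (n + 1)) := WithLp.toLp 2 xSc
    let G : EuclideanSpace ℝ (Fin (n + 1)) := WithLp.toLp 2 g
    have h1 : ‖F + G‖ ≤ ‖F‖ + ‖G‖ := norm_add_le F G
    have e1 : ‖F + G‖ = Real.sqrt (∑ i, (xSc i + g i) ^ 2) := by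
      simp [EuclideanSpace.norm_eq, Real.norm_eq_abs, sq_abs, F, G]
    have e2 : ‖F‖ = Real.sqrt (∑ i, xSc i ^ 2) := by
      simp [EuclideanSpace.norm_eq, Real.norm_eq_abs, sq_abs, F]
    have e3 : ‖G‖ = Real.sqrt (∑ i, g i ^ 2) := by
      simp [EuclideanSpace.norm_eq, Real.norm_eq_abs, sq_abs, G]
    rw [← e1, ← e2, ← e3]
    exact h1
  -- bound on sqrt of sum of g²
  have hgbound : Real.sqrt (∑ i, g i ^ 2) ≤ K.trace := by
    have h00 : K 0 0 ≤ K.trace := by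
      rw [Matrix.trace]
      exact Finset.single_le_sum (fun i _ => hdiag i) (Finset.mem_univ 0)
    have h1 : (∑ i, g i ^ 2) ≤ K.trace * K.trace := by
      calc (∑ i, g i ^ 2) ≤ ∑ i, K i i * K 0 0 := by
            refine Finset.sum_le_sum fun i _ => ?_
            by_cases hi : i ∈ S
            · simp only [hg, hi, if_pos]
              simpa using mul_nonneg (hdiag i) (hdiag 0)
            · simp only [hg, hi, if_neg, not_false_iff]
              exact hCS i
        _ = (∑ i, K i i) * K 0 0 := by rw [Finset.sum_mul]
        _ = K.trace * K 0 0 := by rw [Matrix.trace]; rfl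
        _ ≤ K.trace * K.trace := by nlinarith [hdiag 0]
    calc Real.sqrt (∑ i, g i ^ 2) ≤ Real.sqrt (K.trace * K.trace) := Real.sqrt_le_sqrt h1
      _ = K.trace := Real.sqrt_mul_self htr
  constructor
  · rw [hsum_eq]
    calc Real.sqrt (∑ i, (xSc i + g i) ^ 2)
        ≤ Real.sqrt (∑ i, xSc i ^ 2) + Real.sqrt (∑ i, g i ^ 2) := htri
      _ ≤ Real.sqrt (∑ i, xSc i ^ 2) + K.trace := by linarith
  · have : Real.sqrt (∑ i, xSc i ^ 2) ≤ ∑ i, |xSc i| := by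
      have h1 : (∑ i, xSc i ^ 2) ≤ (∑ i, |xSc i|) ^ 2 := by
        calc (∑ i, xSc i ^ 2) = ∑ i, |xSc i| ^ 2 := by
              exact Finset.sum_congr rfl fun i _ => (sq_abs _).symm
          _ ≤ (∑ i, |xSc i|) ^ 2 :=
              Finset.sum_sq_le_sq_sum_of_nonneg fun i _ => abs_nonneg _
      calc Real.sqrt (∑ i, xSc i ^ 2) ≤ Real.sqrt ((∑ i, |xSc i|) ^ 2) :=
            Real.sqrt_le_sqrt h1
        _ = ∑ i, |xSc i| := Real.sqrt_sq (Finset.sum_nonneg fun i _ => abs_nonneg _)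
    linarith
end
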